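/- Let L be slowly varying at the origin, α ∈ ℝ, x₀ ∈ ℝ, and let f be a tempered distribution which has quasiasymptotic behavior of degree α at x₀ with respect to L with limit g ∈ S'(ℝ). Then g is homogeneous of degree α, i.e., for every a > 0 and every ψ ∈ S(ℝ), a⁻¹⟨g, ψ(·/a)⟩ = a^α ⟨g, ψ⟩. -/

import Mathlib

open MeasureTheory Filter SchwartzMap
open scoped Real Topology ComplexConjugate SchwartzMap

noncomputable section

/-- An affine function `x ↦ a * x + b` has temperate growth. -/
lemma hasTemperateGrowth_of_affine {g : ℝ → ℝ} (a b : ℝ) (hg : ∀ x, g x = a * x + b) :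
    Function.HasTemperateGrowth g := by
  rw [show g = fun x => a * x + b from funext hg]
  apply Function.HasTemperateGrowth.of_fderiv (k := 1) (C := |a| + |b|)
  · have h : (fderiv ℝ fun x : ℝ => a * x + b) = fun _ : ℝ =>
        (a • (1 : ℝ →L[ℝ] ℝ)) := by
      funext x
      have h1 : HasFDerivAt (fun x : ℝ => a * x + b) (a • (1 : ℝ →L[ℝ] ℝ)) x := by
        simpa [ContinuousLinearMap.one_def] using ((hasFDerivAt_id x).const_mul a).add_const b
      exact h1.fderiv
    rw [h]
    exact Function.HasTemperateGrowth.const _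
  · exact (differentiable_id.const_mul a).add_const b
  · intro x
    have : ‖a * x + b‖ ≤ |a| * |x| + |b| := by
      rw [Real.norm_eq_abs]
      calc |a * x + b| ≤ |a * x| + |b| := abs_add_le _ _
      _ = |a| * |x| + |b| := by rw [abs_mul]
    refine this.trans ?_
    have hx : |x| = ‖x‖ := rfl
    nlinarith [abs_nonneg a, abs_nonneg b, norm_nonneg x, abs_nonneg x]

lemma upper_of_affine {g : ℝ → ℝ} (a b : ℝ) (ha : a ≠ 0) (hg : ∀ x, g x = a * x + b) :
    ∃ (k : ℕ) (C : ℝ), ∀ x : ℝ, ‖x‖ ≤ C * (1 + ‖g x‖) ^ k := by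
  refine ⟨1, (1 + |b|) / |a|, fun x => ?_⟩
  have ha' : (0:ℝ) < |a| := abs_pos.mpr ha
  rw [hg x, pow_one, div_mul_eq_mul_div, le_div_iff₀ ha', Real.norm_eq_abs, Real.norm_eq_abs]
  have h1 : |a * x| ≤ |a * x + b| + |b| := by
    calc |a * x| = |(a * x + b) - b| := by ring_nf
    _ ≤ |a * x + b| + |b| := abs_sub _ _
  rw [abs_mul] at h1
  nlinarith [abs_nonneg (a * x + b), abs_nonneg b, abs_nonneg x]

/-- The Schwartz function `x ↦ ψ ((x - x₀) / ε)`, for `ε ≠ 0`. -/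
def SchwartzMap.dilShift (x₀ ε : ℝ) (hε : ε ≠ 0) (ψ : 𝓢(ℝ, ℂ)) : 𝓢(ℝ, ℂ) :=
  SchwartzMap.compCLM (𝕜 := ℝ) (g := fun x : ℝ => (x - x₀) / ε)
    (hasTemperateGrowth_of_affine ε⁻¹ (-(x₀ / ε)) (fun x => by field_simp; ring))
    (upper_of_affine ε⁻¹ (-(x₀ / ε)) (inv_ne_zero hε) (fun x => by field_simp; ring)) ψ

/-- The pairing `⟨f(x₀ + ε ·), ψ⟩ = ε⁻¹ ⟨f, ψ((· - x₀)/ε)⟩` (junk value `0` if `ε = 0`). -/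
def pairScale (f : 𝓢(ℝ, ℂ) → ℂ) (x₀ ε : ℝ) (ψ : 𝓢(ℝ, ℂ)) : ℂ :=
  if hε : ε = 0 then 0 else (ε : ℂ)⁻¹ * f (SchwartzMap.dilShift x₀ ε hε ψ)

/-- Complex conjugation of a Schwartz function. -/
def SchwartzMap.conjSM (ψ : 𝓢(ℝ, ℂ)) : 𝓢(ℝ, ℂ) where
  toFun := fun x => conj (ψ x)
  smooth' := Complex.conjLIE.contDiff.comp ψ.smooth'
  decay' := by
    intro k n
    obtain ⟨C, hC⟩ := ψ.decay' k n
    refine ⟨C, fun x => ?_⟩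
    have h : ‖iteratedFDeriv ℝ n (fun y => Complex.conjLIE (ψ y)) x‖
        = ‖iteratedFDeriv ℝ n (fun y => ψ y) x‖ :=
      Complex.conjLIE.norm_iteratedFDeriv_comp_left (fun y => ψ y) x n
    simpa [Complex.conjLIE_apply] using h ▸ hC x

/-- The wavelet family member `φ_{m,n}(x) = 2^(m/2) φ(2^m x - n)` as a Schwartz function. -/
def SchwartzMap.wavelet (φ : 𝓢(ℝ, ℂ)) (m n : ℤ) : 𝓢(ℝ, ℂ) :=
  (2 : ℝ) ^ ((m : ℝ) / 2) •
    SchwartzMap.compCLM (𝕜 := ℝ) (g := fun x : ℝ => (2 : ℝ) ^ m * x - (n : ℝ))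
      (hasTemperateGrowth_of_affine ((2:ℝ) ^ m) (-(n : ℝ)) (fun x => by ring))
      (upper_of_affine ((2:ℝ) ^ m) (-(n : ℝ)) (by positivity) (fun x => by ring)) φ

/-- `φ` is an orthonormal wavelet: the family `φ_{m,n}` is an orthonormal basis of `L²(ℝ)`. -/
def IsOrthonormalWavelet (φ : 𝓢(ℝ, ℂ)) : Prop :=
  (∀ m n m' n' : ℤ, ∫ x : ℝ, φ.wavelet m n x * conj (φ.wavelet m' n' x)
      = if m = m' ∧ n = n' then 1 else 0) ∧
  ∀ h : ℝ → ℂ, MemLp h 2 volume →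
    (∀ m n : ℤ, ∫ x : ℝ, h x * conj (φ.wavelet m n x) = 0) → h =ᵐ[volume] 0

/-- Membership in `S₀(ℝ)`: all moments vanish. -/
def IsS0 (ψ : 𝓢(ℝ, ℂ)) : Prop := ∀ n : ℕ, ∫ x : ℝ, (x : ℂ) ^ n * ψ x = 0

/-- A measurable function positive near `0⁺` slowly varying at the origin. -/
def SlowlyVaryingAtZero (L : ℝ → ℝ) : Prop :=
  Measurable L ∧ (∃ A > (0:ℝ), ∀ x : ℝ, 0 < x → x ≤ A → 0 < L x) ∧
    ∀ a > (0:ℝ), Tendsto (fun ε => L (a * ε) / L ε) (𝓝[>] 0) (𝓝 1)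

/-- A measurable function positive near `∞` slowly varying at infinity. -/
def SlowlyVaryingAtInfty (L : ℝ → ℝ) : Prop :=
  Measurable L ∧ (∃ A > (0:ℝ), ∀ x : ℝ, A ≤ x → 0 < L x) ∧
    ∀ a > (0:ℝ), Tendsto (fun lam => L (a * lam) / L lam) atTop (𝓝 1)

/-- The wavelet coefficient `c_{m,n}^φ(f; ε, x₀) = ⟨f(x₀+ε·), conj(φ_{m,n})⟩`. -/
def waveletCoeff (φ : 𝓢(ℝ, ℂ)) (f : 𝓢(ℝ, ℂ) → ℂ) (ε x₀ : ℝ) (m n : ℤ) : ℂ :=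
  pairScale f x₀ ε (φ.wavelet m n).conjSM



/-! Substituting `ε ↦ a ε` in the quasiasymptotic limit of `⟨f(x₀ + ε·), ψ⟩` gives the limit of
`⟨f(x₀ + ε·), ψ(·/a)⟩ = a ⟨f(x₀ + aε·), ψ⟩`, while slow variation of `L` turns the normalization
`(aε)^α L(aε)` into `a^α ε^α L(ε)`. Uniqueness of limits then forces `⟨g, ψ(·/a)⟩ = a · a^α ⟨g, ψ⟩`. -/

@[simp]
lemma SchwartzMap.dilShift_apply (x₀ ε : ℝ) (hε : ε ≠ 0) (ψ : 𝓢(ℝ, ℂ)) (x : ℝ) :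
    dilShift x₀ ε hε ψ x = ψ ((x - x₀) / ε) := rfl

lemma SchwartzMap.dilShift_dilShift_zero (x₀ ε a : ℝ) (hε : ε ≠ 0) (ha : a ≠ 0)
    (ψ : 𝓢(ℝ, ℂ)) :
    dilShift x₀ ε hε (dilShift 0 a ha ψ) = dilShift x₀ (a * ε) (mul_ne_zero ha hε) ψ := by
  ext x
  simp only [dilShift_apply, sub_zero, div_div, mul_comm ε]

lemma pairScale_dilShift_zero (f : 𝓢(ℝ, ℂ) → ℂ) (x₀ : ℝ) {ε a : ℝ} (hε : ε ≠ 0) (ha : a ≠ 0)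
    (ψ : 𝓢(ℝ, ℂ)) :
    pairScale f x₀ ε (SchwartzMap.dilShift 0 a ha ψ) = a * pairScale f x₀ (a * ε) ψ := by
  have hac : (a : ℂ) ≠ 0 := by exact_mod_cast ha
  rw [pairScale, pairScale, dif_neg hε, dif_neg (mul_ne_zero ha hε),
    SchwartzMap.dilShift_dilShift_zero, Complex.ofReal_mul, mul_inv, ← mul_assoc,
    mul_inv_cancel_left₀ hac]

lemma tendsto_const_mul_nhdsGT_zero {a : ℝ} (ha : 0 < a) :
    Tendsto (a * ·) (𝓝[>] 0) (𝓝[>] 0) :=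
  tendsto_iff_comap.2 (comap_mulLeft_nhdsGT_zero ha).ge

lemma Filter.Tendsto.comp_div_of_tendsto_ratio {ι 𝕜 : Type*} [NormedField 𝕜] {l : Filter ι}
    {φ : ι → ι} {F N : ι → 𝕜} {y c : 𝕜} (hF : Tendsto (fun x => F x / N x) l (𝓝 y))
    (hφ : Tendsto φ l l)
    (hN : Tendsto (fun x => N (φ x) / N x) l (𝓝 c)) (hN0 : ∀ᶠ x in l, N x ≠ 0) :
    Tendsto (fun x => F (φ x) / N x) l (𝓝 (y * c)) := by
  refine ((hF.comp hφ).mul hN).congr' ?_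
  filter_upwards [hφ.eventually hN0] with x hx
  exact div_mul_div_cancel₀ hx

namespace SlowlyVaryingAtZero

variable {L : ℝ → ℝ}

lemma eventually_pos (hL : SlowlyVaryingAtZero L) : ∀ᶠ ε in 𝓝[>] 0, 0 < L ε := by
  obtain ⟨-, ⟨A, hA, hpos⟩, -⟩ := hL
  filter_upwards [Ioo_mem_nhdsGT hA] with ε hε using hpos ε hε.1 hε.2.le

lemma tendsto_rpow_mul_div (hL : SlowlyVaryingAtZero L) (α : ℝ) {a : ℝ} (ha : 0 < a) :
    Tendsto (fun ε => (a * ε) ^ α * L (a * ε) / (ε ^ α * L ε)) (𝓝[>] 0) (𝓝 (a ^ α)) := by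
  have hlim := (hL.2.2 a ha).const_mul (a ^ α)
  rw [mul_one] at hlim
  refine hlim.congr' ?_
  filter_upwards [self_mem_nhdsWithin] with ε (hε : 0 < ε)
  rw [Real.mul_rpow ha.le hε.le, mul_assoc, mul_div_assoc,
    mul_div_mul_left _ _ (Real.rpow_pos_of_pos hε α).ne']

end SlowlyVaryingAtZero

/-- If a tempered distribution `f` has quasiasymptotic behavior of degree `α`
at `x₀` with respect to `L` with limit `g ∈ S'(ℝ)`, then `g` is homogeneous of degree `α`:
`a⁻¹⟨g, ψ(·/a)⟩ = a^α ⟨g, ψ⟩` for every `a > 0` and every Schwartz `ψ`. -/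
theorem homogeneity_of_quasiasymptotic_limit
    (L : ℝ → ℝ) (hL : SlowlyVaryingAtZero L) (α x₀ : ℝ)
    (f g : 𝓢(ℝ, ℂ) →L[ℂ] ℂ)
    (hfg : ∀ ψ : 𝓢(ℝ, ℂ),
      Tendsto (fun ε : ℝ => pairScale (⇑f) x₀ ε ψ / ((ε ^ α * L ε : ℝ) : ℂ))
        (𝓝[>] 0) (𝓝 (g ψ))) :
    ∀ a : ℝ, 0 < a → ∀ ψ : 𝓢(ℝ, ℂ),
      pairScale (⇑g) 0 a ψ = ((a ^ α : ℝ) : ℂ) * g ψ := by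
  intro a ha ψ
  set Ψ := SchwartzMap.dilShift 0 a ha.ne' ψ
  have hnorm : ∀ᶠ ε in 𝓝[>] 0, ((ε ^ α * L ε : ℝ) : ℂ) ≠ 0 := by
    filter_upwards [self_mem_nhdsWithin, hL.eventually_pos] with ε (hε : 0 < ε) hLε
    exact_mod_cast (mul_pos (Real.rpow_pos_of_pos hε α) hLε).ne'
  have hratio := (Complex.continuous_ofReal.tendsto _).comp (hL.tendsto_rpow_mul_div α ha)
  have hscaled := ((hfg ψ).comp_div_of_tendsto_ratio (tendsto_const_mul_nhdsGT_zero ha)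
    (by simpa only [Function.comp_def, Complex.ofReal_div] using hratio) hnorm).const_mul (a : ℂ)
  have hΨ : g Ψ = a * (g ψ * ((a ^ α : ℝ) : ℂ)) := by
    refine tendsto_nhds_unique (hfg Ψ) (hscaled.congr' ?_)
    filter_upwards [self_mem_nhdsWithin] with ε (hε : 0 < ε)
    rw [pairScale_dilShift_zero _ _ hε.ne', mul_div_assoc]
  have hac : (a : ℂ) ≠ 0 := by exact_mod_cast ha.ne'
  rw [pairScale, dif_neg ha.ne', hΨ, inv_mul_cancel_left₀ hac, mul_comm]

end
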